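/- arXiv:1708.05842 — 3 statements merged into one kernel-verified Lean document; each statement's English description precedes it below -/
import Mathlib

section
/- Let u : ℝⁿ → [0,∞) be upper semicontinuous, bounded, and satisfy -Δu ≤ M in the viscosity sense (equivalently, u(x) + (M/(2n))|x - x₀|² is subharmonic near every x₀). If A ⊂ ℝⁿ is a closed set such that the set {u > 0} \ A has Lebesgue measure zero, then u(x₀) ≤ C_n M r² for every x₀ and r > 0 such that B_r(x₀) ∩ A = ∅, where C_n is a dimensional constant. In particular, u = 0 outside A. -/
open Set MeasureTheory Metric Filter

/-- If `u ≥ 0` is USC, bounded, satisfies the sub-mean value property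
`u(x) ≤ ⨍_{B_r(x)} u + C_n M r²` (i.e. `-Δu ≤ M` in the viscosity sense), and the set
`{u > 0} \ A` has measure zero for a closed set `A`, then `u(x₀) ≤ C_n M r²` whenever
`B_r(x₀) ∩ A = ∅`; in particular `u = 0` outside `A`. -/
theorem usc_subharmonic_vanishes_off_support {n : ℕ} (M Cn : ℝ) (hM : 0 ≤ M) (hCn : 0 < Cn)
    (u : EuclideanSpace ℝ (Fin n) → ℝ)
    (husc : UpperSemicontinuous u)
    (hbdd : ∃ C : ℝ, ∀ x, u x ≤ C)
    (hnonneg : ∀ x, 0 ≤ u x)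
    (hmean : ∀ (x : EuclideanSpace ℝ (Fin n)) (r : ℝ), 0 < r →
      u x ≤ (volume (ball x r)).toReal⁻¹ * (∫ y in ball x r, u y) + Cn * M * r ^ 2)
    (A : Set (EuclideanSpace ℝ (Fin n))) (hA : IsClosed A)
    (hzero : volume ({x | 0 < u x} \ A) = 0) :
    (∀ (x₀ : EuclideanSpace ℝ (Fin n)) (r : ℝ), 0 < r → ball x₀ r ∩ A = ∅ →
      u x₀ ≤ Cn * M * r ^ 2) ∧
    (∀ x ∉ A, u x = 0) := by
  have key : ∀ (x₀ : EuclideanSpace ℝ (Fin n)) (r : ℝ), 0 < r → ball x₀ r ∩ A = ∅ →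
      u x₀ ≤ Cn * M * r ^ 2 := by
    intro x₀ r hr hball
    have hae : ∀ᵐ x ∂volume.restrict (ball x₀ r), u x = 0 := by
      rw [ae_restrict_iff' measurableSet_ball]
      have hsub : {x | x ∈ ball x₀ r → u x = 0}ᶜ ⊆ {x | 0 < u x} \ A := by
        intro x hx
        simp only [mem_compl_iff, mem_setOf_eq, not_forall] at hx
        obtain ⟨hxb, hxu⟩ := hx
        refine ⟨lt_of_le_of_ne (hnonneg x) (Ne.symm hxu), fun hxA => ?_⟩
        have : x ∈ ball x₀ r ∩ A := ⟨hxb, hxA⟩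
        rw [hball] at this
        exact this
      exact measure_mono_null hsub hzero
    have hint : (∫ y in ball x₀ r, u y) = 0 := by
      simp [integral_congr_ae (g := fun _ => (0:ℝ)) hae]
    have := hmean x₀ r hr
    rwa [hint, mul_zero, zero_add] at this
  refine ⟨key, fun x hx => ?_⟩
  have hopen : IsOpen Aᶜ := hA.isOpen_compl
  obtain ⟨ε, hε, hballε⟩ := Metric.isOpen_iff.mp hopen x hx
  have hle : u x ≤ 0 := by
    have htend : Tendsto (fun r : ℝ => Cn * M * r ^ 2) (nhdsWithin 0 (Set.Ioi 0)) (nhds 0) := by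
      have : Tendsto (fun r : ℝ => Cn * M * r ^ 2) (nhds 0) (nhds (Cn * M * 0 ^ 2)) := by
        exact (continuous_const.mul (continuous_pow 2)).tendsto 0
      simpa using this.mono_left nhdsWithin_le_nhds
    refine ge_of_tendsto htend ?_
    filter_upwards [Ioo_mem_nhdsGT_of_mem ⟨le_refl 0, hε⟩] with r hr
    refine key x r hr.1 ?_
    rw [Set.eq_empty_iff_forall_notMem]
    intro y hy
    exact hballε (Metric.ball_subset_ball hr.2.le hy.1) hy.2
  exact le_antisymm hle (hnonneg x)
end

section
/- Let μ : [0,T] → (0,∞) satisfy μ'(t) ≤ (F(X(t,x₀)) - 2ε) μ(t), let η ∈ C²(ℝⁿ) be radially symmetric, nonnegative, supported in the closed unit ball and nonincreasing in |x|, and define ψ(x,t) := μ(t) η((x - X(t,x₀)) / (r e^{-Lt})), where L is a Lipschitz constant of b on the tube N = {(x,t) : |x - X(t,x₀)| ≤ r, t ∈ [0,T]} and |F(x) - F(X(t,x₀))| < ε on N. Then ψ satisfies the pointwise inequality ψ_t ≤ -∇ψ · b + (F(X(t,x₀)) - 2ε) ψ at all points of {ψ > 0} with t ∈ (0,T). 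-/
open Set Metric

lemma radial_dir_nonpos {n : ℕ} (η : EuclideanSpace ℝ (Fin n) → ℝ)
    (hη : Differentiable ℝ η)
    (hηmono : ∀ x y : EuclideanSpace ℝ (Fin n), ‖x‖ ≤ ‖y‖ → η y ≤ η x)
    (z v : EuclideanSpace ℝ (Fin n)) (hzv : 0 ≤ (inner ℝ z v : ℝ)) :
    fderiv ℝ η z v ≤ 0 := by
  set g : ℝ → ℝ := fun s => η (z + s • v) with hg
  have hline : HasDerivAt (fun s : ℝ => z + s • v) v 0 := by
    simpa using ((hasDerivAt_id (0:ℝ)).smul_const v).const_add z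
  have hgd : HasDerivAt g (fderiv ℝ η z v) 0 := by
    have hz : HasFDerivAt η (fderiv ℝ η z) (z + (0:ℝ) • v) := by
      simpa using (hη z).hasFDerivAt
    exact hz.comp_hasDerivAt (0:ℝ) hline
  have hbound : ∀ s : ℝ, 0 ≤ s → g s ≤ g 0 := by
    intro s hs
    have hnorm : ‖z‖ ≤ ‖z + s • v‖ := by
      have h1 : ‖z + s • v‖ ^ 2 = ‖z‖ ^ 2 + 2 * s * (inner ℝ z v : ℝ) + s ^ 2 * ‖v‖ ^ 2 := by
        rw [norm_add_sq_real, real_inner_smul_right, norm_smul]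
        simp [mul_pow]
        ring
      nlinarith [norm_nonneg (z + s • v), norm_nonneg z, sq_nonneg s, mul_nonneg hs hzv]
    simpa [hg] using hηmono z (z + s • v) hnorm
  have hslope : Filter.Tendsto (slope g 0) (nhdsWithin 0 (Set.Ioi 0)) (nhds (fderiv ℝ η z v)) := by
    have := hasDerivAt_iff_tendsto_slope.mp hgd
    exact this.mono_left (nhdsWithin_mono _ (fun x hx => ne_of_gt hx))
  refine le_of_tendsto hslope ?_
  filter_upwards [self_mem_nhdsWithin] with s hs
  have hs0 : (0:ℝ) < s := hs
  have hle : g s - g 0 ≤ 0 := by linarith [hbound s hs0.le]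
  have hsl : slope g 0 s = (g s - g 0) / s := by
    rw [slope_def_field]; ring
  rw [hsl]
  exact div_nonpos_of_nonpos_of_nonneg hle hs0.le

/-- The "go with the flow" density barrier `ψ(x,t) = μ(t) η((x - X(t))/(r e^{-Lt}))` satisfies
the transport inequality `ψ_t ≤ -∇ψ · b + (F(X(t)) - 2ε) ψ` on `{ψ > 0}`, `t ∈ (0,T)`. -/
theorem flow_barrier_transport_inequality {n : ℕ}
    (b : EuclideanSpace ℝ (Fin n) → EuclideanSpace ℝ (Fin n))
    (F : EuclideanSpace ℝ (Fin n) → ℝ) (hF : Continuous F)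
    (ε r T : ℝ) (hε : 0 < ε) (hr : 0 < r) (hT : 0 < T)
    (x₀ : EuclideanSpace ℝ (Fin n)) (X : ℝ → EuclideanSpace ℝ (Fin n))
    (hX0 : X 0 = x₀)
    (hX : ∀ t : ℝ, HasDerivAt X (b (X t)) t)
    (L : NNReal)
    (hb : LipschitzOnWith L b
      {x | ∃ t ∈ Set.Icc (0:ℝ) T, ‖x - X t‖ ≤ r})
    (hclose : ∀ (x : EuclideanSpace ℝ (Fin n)) (t : ℝ), t ∈ Set.Icc 0 T → ‖x - X t‖ ≤ r →
      |F x - F (X t)| < ε)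
    (μ μ' : ℝ → ℝ)
    (hμpos : ∀ t ∈ Set.Icc (0:ℝ) T, 0 < μ t)
    (hμderiv : ∀ t ∈ Set.Icc (0:ℝ) T, HasDerivAt μ (μ' t) t)
    (hμineq : ∀ t ∈ Set.Icc (0:ℝ) T, μ' t ≤ (F (X t) - 2 * ε) * μ t)
    (η : EuclideanSpace ℝ (Fin n) → ℝ)
    (hη : ContDiff ℝ 2 η)
    (hηnonneg : ∀ x, 0 ≤ η x)
    (hηsupp : ∀ x : EuclideanSpace ℝ (Fin n), 1 < ‖x‖ → η x = 0)
    (hηradial : ∀ x y : EuclideanSpace ℝ (Fin n), ‖x‖ = ‖y‖ → η x = η y)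
    (hηmono : ∀ x y : EuclideanSpace ℝ (Fin n), ‖x‖ ≤ ‖y‖ → η y ≤ η x)
    (ψ : EuclideanSpace ℝ (Fin n) → ℝ → ℝ)
    (hψ : ∀ x t, ψ x t = μ t * η ((r * Real.exp (-(L : ℝ) * t))⁻¹ • (x - X t))) :
    ∀ (x : EuclideanSpace ℝ (Fin n)) (t : ℝ), t ∈ Set.Ioo 0 T → 0 < ψ x t →
      deriv (fun s => ψ x s) t ≤
        -(fderiv ℝ (fun y => ψ y t) x (b x)) + (F (X t) - 2 * ε) * ψ x t := by
  intro x t ht hψpos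
  have hηdiff : Differentiable ℝ η := hη.differentiable (by norm_num)
  have htI : t ∈ Set.Icc (0:ℝ) T := ⟨ht.1.le, ht.2.le⟩
  set c : ℝ := r * Real.exp (-(L:ℝ) * t) with hc
  have hce : (r * Real.exp (-(L:ℝ) * t))⁻¹ = c⁻¹ := rfl
  have hcpos : 0 < c := mul_pos hr (Real.exp_pos _)
  set z : EuclideanSpace ℝ (Fin n) := c⁻¹ • (x - X t) with hz
  have hzc : (r * Real.exp (-(L:ℝ) * t))⁻¹ • (x - X t) = z := rfl
  have hψeq : ψ x t = μ t * η z := hψ x t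
  have hμt : 0 < μ t := hμpos t htI
  have hηz : 0 < η z := by
    rcases lt_or_ge 0 (η z) with h | h
    · exact h
    · exfalso; rw [hψeq] at hψpos; nlinarith
  have hz1 : ‖z‖ ≤ 1 := by
    by_contra h
    push_neg at h
    exact absurd (hηsupp z h) (ne_of_gt hηz)
  have hnormz : ‖x - X t‖ = c * ‖z‖ := by
    rw [hz, norm_smul, norm_inv, Real.norm_eq_abs, abs_of_pos hcpos,
      ← mul_assoc, mul_inv_cancel₀ (ne_of_gt hcpos), one_mul]
  have hcr : c ≤ r := by
    have h1 : Real.exp (-(L:ℝ) * t) ≤ 1 := by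
      apply Real.exp_le_one_iff.mpr
      have : (0:ℝ) ≤ (L:ℝ) * t := mul_nonneg L.coe_nonneg ht.1.le
      linarith
    nlinarith
  have hxr : ‖x - X t‖ ≤ r := by
    rw [hnormz]
    nlinarith [norm_nonneg z]
  have hxmem : x ∈ {y : EuclideanSpace ℝ (Fin n) | ∃ s ∈ Set.Icc (0:ℝ) T, ‖y - X s‖ ≤ r} :=
    ⟨t, htI, hxr⟩
  have hXmem : X t ∈ {y : EuclideanSpace ℝ (Fin n) | ∃ s ∈ Set.Icc (0:ℝ) T, ‖y - X s‖ ≤ r} :=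
    ⟨t, htI, by simp [hr.le]⟩
  have hbLip : ‖b x - b (X t)‖ ≤ (L:ℝ) * ‖x - X t‖ := by
    have := hb.dist_le_mul x hxmem (X t) hXmem
    simpa [dist_eq_norm] using this
  -- derivative of the dilation factor
  have ha : HasDerivAt (fun s : ℝ => (r * Real.exp (-(L:ℝ) * s))⁻¹) ((L:ℝ) * c⁻¹) t := by
    have heq : (fun s : ℝ => (r * Real.exp (-(L:ℝ) * s))⁻¹) =
        fun s : ℝ => r⁻¹ * Real.exp ((L:ℝ) * s) := by
      funext s
      rw [mul_inv, ← Real.exp_neg]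
      ring_nf
    rw [heq]
    have hexp : HasDerivAt (fun s : ℝ => Real.exp ((L:ℝ) * s))
        (Real.exp ((L:ℝ) * t) * (L:ℝ)) t := by
      simpa using ((hasDerivAt_id t).const_mul (L:ℝ)).exp
    have h2 := hexp.const_mul (r⁻¹)
    refine h2.congr_deriv ?_
    rw [hc, mul_inv, ← Real.exp_neg]
    ring_nf
  -- time derivative of the rescaled position
  have hwder : HasDerivAt (fun s : ℝ => (r * Real.exp (-(L:ℝ) * s))⁻¹ • (x - X s))
      ((L:ℝ) • z - c⁻¹ • b (X t)) t := by
    have hXd : HasDerivAt (fun s : ℝ => x - X s) (-(b (X t))) t := (hX t).const_sub x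
    have h := ha.smul hXd
    refine HasDerivAt.congr_deriv (f := fun s : ℝ => (r * Real.exp (-(L:ℝ) * s))⁻¹ • (x - X s)) h ?_
    rw [hce, hz]
    module
  obtain ⟨D, hD⟩ : ∃ D : EuclideanSpace ℝ (Fin n) →L[ℝ] ℝ, D = fderiv ℝ η z := ⟨_, rfl⟩
  have hfz : HasFDerivAt η D ((r * Real.exp (-(L:ℝ) * t))⁻¹ • (x - X t)) := by
    rw [hzc, hD]
    exact (hηdiff z).hasFDerivAt
  have hηw : HasDerivAt (fun s : ℝ => η ((r * Real.exp (-(L:ℝ) * s))⁻¹ • (x - X s)))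
      (D ((L:ℝ) • z - c⁻¹ • b (X t))) t :=
    hfz.comp_hasDerivAt t hwder
  have hψt : HasDerivAt (fun s => ψ x s)
      (μ' t * η z + μ t * D ((L:ℝ) • z - c⁻¹ • b (X t))) t := by
    have heq : (fun s => ψ x s) =
        fun s => μ s * η ((r * Real.exp (-(L:ℝ) * s))⁻¹ • (x - X s)) := by
      funext s; exact hψ x s
    rw [heq]
    exact (hμderiv t htI).mul hηw
  have hderiv_eq : deriv (fun s => ψ x s) t =
      μ' t * η z + μ t * D ((L:ℝ) • z - c⁻¹ • b (X t)) := hψt.deriv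
  -- space derivative
  have hspace : fderiv ℝ (fun y => ψ y t) x (b x) = μ t * D (c⁻¹ • b x) := by
    have hinner : HasFDerivAt (fun y : EuclideanSpace ℝ (Fin n) =>
        (r * Real.exp (-(L:ℝ) * t))⁻¹ • (y - X t))
        (c⁻¹ • (ContinuousLinearMap.id ℝ (EuclideanSpace ℝ (Fin n)))) x := by
      have h1 : HasFDerivAt (fun y : EuclideanSpace ℝ (Fin n) => y - X t)
          (ContinuousLinearMap.id ℝ (EuclideanSpace ℝ (Fin n))) x :=
        (hasFDerivAt_id x).sub_const (X t)
      have h2 := h1.const_smul ((r * Real.exp (-(L:ℝ) * t))⁻¹)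
      exact h2
    have hfz' : HasFDerivAt η D ((r * Real.exp (-(L:ℝ) * t))⁻¹ • (x - X t)) := hfz
    have hcomp := hfz'.comp x hinner
    have hfull : HasFDerivAt
        (fun y : EuclideanSpace ℝ (Fin n) =>
          μ t * η ((r * Real.exp (-(L:ℝ) * t))⁻¹ • (y - X t)))
        (μ t • D.comp (c⁻¹ • (ContinuousLinearMap.id ℝ (EuclideanSpace ℝ (Fin n))))) x :=
      hcomp.const_mul (μ t)
    have heq2 : (fun y => ψ y t) =
        fun y : EuclideanSpace ℝ (Fin n) =>
          μ t * η ((r * Real.exp (-(L:ℝ) * t))⁻¹ • (y - X t)) := by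
      funext y; exact hψ y t
    rw [heq2, hfull.fderiv]
    simp [ContinuousLinearMap.comp_apply]
  rw [hderiv_eq, hspace, hψ x t, hzc]
  -- main estimate : the transport term is nonpositive
  set v : EuclideanSpace ℝ (Fin n) := (L:ℝ) • z + c⁻¹ • (b x - b (X t)) with hv
  have hvkey : D ((L:ℝ) • z - c⁻¹ • b (X t)) + D (c⁻¹ • b x) ≤ 0 := by
    have hsplit : (L:ℝ) • z - c⁻¹ • b (X t) = v - c⁻¹ • b x := by
      rw [hv, smul_sub]; abel
    have hcomb : D ((L:ℝ) • z - c⁻¹ • b (X t)) + D (c⁻¹ • b x) = D v := by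
      rw [hsplit, map_sub]; ring
    rw [hcomb, hD]
    refine radial_dir_nonpos η hηdiff hηmono z v ?_
    have h2 : (inner ℝ z ((L:ℝ) • z) : ℝ) = (L:ℝ) * ‖z‖ ^ 2 := by
      rw [real_inner_smul_right z z ((L:ℝ))]
      rw [real_inner_self_eq_norm_sq]
    have h3 : (inner ℝ z (c⁻¹ • (b x - b (X t))) : ℝ) =
        c⁻¹ * (inner ℝ z (b x - b (X t)) : ℝ) :=
      real_inner_smul_right z (b x - b (X t)) c⁻¹
    have hinner1 : (inner ℝ z v : ℝ) =
        (L:ℝ) * ‖z‖ ^ 2 + c⁻¹ * (inner ℝ z (b x - b (X t)) : ℝ) := by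
      rw [hv, inner_add_right, h2, h3]
    rw [hinner1]
    have hlow : -(‖z‖ * ((L:ℝ) * (c * ‖z‖))) ≤ (inner ℝ z (b x - b (X t)) : ℝ) := by
      have habs : |(inner ℝ z (b x - b (X t)) : ℝ)| ≤ ‖z‖ * ‖b x - b (X t)‖ :=
        abs_real_inner_le_norm z _
      have h4 : ‖b x - b (X t)‖ ≤ (L:ℝ) * (c * ‖z‖) := by rw [← hnormz]; exact hbLip
      have h5 := neg_abs_le (inner ℝ z (b x - b (X t)) : ℝ)
      have h10 : ‖z‖ * ‖b x - b (X t)‖ ≤ ‖z‖ * ((L:ℝ) * (c * ‖z‖)) :=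
        mul_le_mul_of_nonneg_left h4 (norm_nonneg z)
      linarith
    have hcinv : (0:ℝ) < c⁻¹ := inv_pos.mpr hcpos
    have h6 : c⁻¹ * (-(‖z‖ * ((L:ℝ) * (c * ‖z‖)))) ≤
        c⁻¹ * (inner ℝ z (b x - b (X t)) : ℝ) :=
      mul_le_mul_of_nonneg_left hlow hcinv.le
    have h7 : c⁻¹ * (-(‖z‖ * ((L:ℝ) * (c * ‖z‖)))) = -((L:ℝ) * ‖z‖ ^ 2) := by
      field_simp
    linarith
  have hμe : μ' t * η z ≤ (F (X t) - 2 * ε) * (μ t * η z) := by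
    have h8 := mul_le_mul_of_nonneg_right (hμineq t htI) (hηnonneg z)
    rw [mul_assoc] at h8
    exact h8
  have hsum : μ t * D ((L:ℝ) • z - c⁻¹ • b (X t)) + μ t * D (c⁻¹ • b x) ≤ 0 := by
    have h9 := mul_le_mul_of_nonneg_left hvkey hμt.le
    rw [mul_zero, mul_add] at h9
    exact h9
  linarith
end

section
/- Fix x₀ ∈ ℝⁿ, T > 0, r > 0, and let L be a Lipschitz constant of b on N = {(x,t) : |x - X(t,x₀)| ≤ r, t ∈ [0,T]}. Let κ := (1/2) inf_N F > 0 and suppose μ : [0,T] → (0,∞) satisfies μ' ≤ κ(m-1)μ and (2n/r²) e^{2LT} max μ ≤ κ. Then π(x,t) := μ(t)(1 - |x - X(t,x₀)|² / (r² e^{-2Lt})) satisfies, at every point where π > 0 and t ∈ [0,T]: (i) Δπ + F ≥ κ, and (ii) π_t ≤ (m-1) π (Δπ + F) - ∇π · b + |∇π|². -/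
open Set

noncomputable def lapl {n : ℕ} (u : EuclideanSpace ℝ (Fin n) → ℝ)
    (x : EuclideanSpace ℝ (Fin n)) : ℝ :=
  ∑ i : Fin n, fderiv ℝ (fun y => fderiv ℝ u y (EuclideanSpace.single i 1)) x
    (EuclideanSpace.single i 1)

set_option maxHeartbeats 2000000 in
/-- The pressure barrier `π(x,t) = μ(t)(1 - |x - X(t)|²/(r² e^{-2Lt}))` satisfies
`Δπ + F ≥ κ` and the subsolution inequality for the pressure-form porous medium equation
on its positivity set, uniformly in `m > 1`. -/
theorem pressure_flow_barrier_subsolution {n : ℕ} (m : ℝ) (hm : 1 < m)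
    (b : EuclideanSpace ℝ (Fin n) → EuclideanSpace ℝ (Fin n))
    (F : EuclideanSpace ℝ (Fin n) → ℝ) (hF : Continuous F)
    (r T κ : ℝ) (hr : 0 < r) (hT : 0 < T) (hκ : 0 < κ)
    (x₀ : EuclideanSpace ℝ (Fin n)) (X : ℝ → EuclideanSpace ℝ (Fin n))
    (hX0 : X 0 = x₀)
    (hX : ∀ t : ℝ, HasDerivAt X (b (X t)) t)
    (L : NNReal)
    (hb : LipschitzOnWith L b {x | ∃ t ∈ Set.Icc (0:ℝ) T, ‖x - X t‖ ≤ r})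
    (hκF : ∀ (x : EuclideanSpace ℝ (Fin n)) (t : ℝ), t ∈ Set.Icc 0 T → ‖x - X t‖ ≤ r →
      2 * κ ≤ F x)
    (μ μ' : ℝ → ℝ)
    (hμpos : ∀ t ∈ Set.Icc (0:ℝ) T, 0 < μ t)
    (hμderiv : ∀ t ∈ Set.Icc (0:ℝ) T, HasDerivAt μ (μ' t) t)
    (hμgrow : ∀ t ∈ Set.Icc (0:ℝ) T, μ' t ≤ κ * (m - 1) * μ t)
    (hμsize : ∀ t ∈ Set.Icc (0:ℝ) T,
      (2 * n / r ^ 2) * Real.exp (2 * (L : ℝ) * T) * μ t ≤ κ)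
    (π : EuclideanSpace ℝ (Fin n) → ℝ → ℝ)
    (hπ : ∀ x t, π x t = μ t * (1 - ‖x - X t‖ ^ 2 / (r ^ 2 * Real.exp (-2 * (L : ℝ) * t)))) :
    ∀ (x : EuclideanSpace ℝ (Fin n)) (t : ℝ), t ∈ Set.Icc 0 T → 0 < π x t →
      (κ ≤ lapl (fun y => π y t) x + F x) ∧
      deriv (fun s => π x s) t ≤
        (m - 1) * π x t * (lapl (fun y => π y t) x + F x)
          - fderiv ℝ (fun y => π y t) x (b x)
          + ‖fderiv ℝ (fun y => π y t) x‖ ^ 2 := by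
  intro x t ht hpos
  have hL0 : (0:ℝ) ≤ (L:ℝ) := L.coe_nonneg
  set a : EuclideanSpace ℝ (Fin n) := X t with ha
  set c : ℝ := r ^ 2 * Real.exp (-2 * (L : ℝ) * t) with hc
  have hcpos : 0 < c := by rw [hc]; positivity
  have hcne : c ≠ 0 := ne_of_gt hcpos
  have hμt : 0 < μ t := hμpos t ht
  set N : ℝ := ‖x - a‖ ^ 2 with hN
  have hN0 : 0 ≤ N := by rw [hN]; positivity
  -- positivity of π gives N < c
  have hπx : π x t = μ t * (1 - N / c) := by rw [hπ]
  have hPpos : 0 < 1 - N / c := by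
    rw [hπx] at hpos
    by_contra h
    push_neg at h
    nlinarith
  have hNc : N < c := by
    have : N / c < 1 := by linarith
    exact (div_lt_one hcpos).mp this
  have hcr : c ≤ r ^ 2 := by
    have h1 : Real.exp (-2 * (L:ℝ) * t) ≤ 1 := by
      apply Real.exp_le_one_iff.mpr
      nlinarith [ht.1]
    rw [hc]; nlinarith
  have hxr : ‖x - a‖ ≤ r := by
    nlinarith [norm_nonneg (x - a)]
  -- spatial derivative
  have hfd : ∀ y : EuclideanSpace ℝ (Fin n), HasFDerivAt (fun z => π z t)
      (-((μ t / c) • (2 • (innerSL ℝ (y - a))))) y := by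
    intro y
    have hfun : (fun z => π z t) = fun z : EuclideanSpace ℝ (Fin n) =>
        μ t - μ t / c * ‖z - a‖ ^ 2 := by
      funext z
      rw [hπ z t, ← ha, ← hc]
      field_simp
    rw [hfun]
    have h1 : HasFDerivAt (fun z : EuclideanSpace ℝ (Fin n) => z - a)
        (ContinuousLinearMap.id ℝ _) y := (hasFDerivAt_id y).sub_const a
    have h2 : HasFDerivAt (fun z : EuclideanSpace ℝ (Fin n) => ‖z - a‖ ^ 2)
        (2 • (innerSL ℝ (y - a))) y := by
      simpa only [ContinuousLinearMap.comp_id] using h1.norm_sq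
    exact (h2.const_mul (μ t / c)).const_sub (μ t)
  have hfderiv : fderiv ℝ (fun y => π y t) x = -((μ t / c) • (2 • (innerSL ℝ (x - a)))) :=
    (hfd x).fderiv
  -- value of gradient at b x
  set I' : ℝ := inner ℝ (x - a) (b x) with hI'
  set I : ℝ := inner ℝ (x - a) (b a) with hI
  have hgradb : fderiv ℝ (fun y => π y t) x (b x) = -(μ t / c * (2 * I')) := by
    rw [hfderiv]
    simp only [ContinuousLinearMap.neg_apply, ContinuousLinearMap.smul_apply,
      innerSL_apply_apply, smul_eq_mul, nsmul_eq_mul]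
    rw [← hI']
    norm_num
  -- Laplacian
  have hlapl : lapl (fun y => π y t) x = -(μ t / c * 2) * n := by
    have hterm : ∀ i : Fin n,
        fderiv ℝ (fun y => fderiv ℝ (fun z => π z t) y (EuclideanSpace.single i 1)) x
          (EuclideanSpace.single i 1) = -(μ t / c * 2) := by
      intro i
      set e : EuclideanSpace ℝ (Fin n) := EuclideanSpace.single i 1 with he
      have hgi : (fun y => fderiv ℝ (fun z => π z t) y e)
          = fun y : EuclideanSpace ℝ (Fin n) => -(μ t / c) * (2 * (inner ℝ (y - a) e : ℝ)) := by
        funext y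
        rw [(hfd y).fderiv]
        simp only [ContinuousLinearMap.neg_apply, ContinuousLinearMap.smul_apply,
          innerSL_apply_apply, smul_eq_mul, nsmul_eq_mul]
        norm_num
      rw [hgi]
      have hinnerD : HasFDerivAt (fun y : EuclideanSpace ℝ (Fin n) => (inner ℝ (y - a) e : ℝ))
          (innerSL ℝ e) x := by
        have heq : (fun y : EuclideanSpace ℝ (Fin n) => (inner ℝ (y - a) e : ℝ))
            = fun y => (innerSL ℝ e) y - (inner ℝ e a : ℝ) := by
          funext y
          rw [inner_sub_left, innerSL_apply_apply, real_inner_comm a e, real_inner_comm y e]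
        rw [heq]
        exact ((innerSL ℝ e).hasFDerivAt).sub_const _
      have hD := (hinnerD.const_mul 2).const_mul (-(μ t / c))
      rw [hD.fderiv]
      have hee : (inner ℝ e e : ℝ) = 1 := by
        rw [he, EuclideanSpace.inner_single_left, EuclideanSpace.single_apply]
        simp
      simp only [ContinuousLinearMap.smul_apply, innerSL_apply_apply, smul_eq_mul, nsmul_eq_mul]
      rw [hee]
      norm_num
    rw [lapl]
    rw [Finset.sum_congr rfl fun i _ => hterm i]
    simp only [Finset.sum_const, Finset.card_univ, Fintype.card_fin, nsmul_eq_mul]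
    ring
  -- part (i)
  have hFx : 2 * κ ≤ F x := hκF x t ht hxr
  have hsize : μ t / c * 2 * n ≤ κ := by
    have hval : μ t / c * 2 * n = 2 * n / r ^ 2 * Real.exp (2 * (L:ℝ) * t) * μ t := by
      have h2 : (-2 * (L:ℝ) * t) = -(2 * (L:ℝ) * t) := by ring
      rw [hc, h2, Real.exp_neg]
      have := Real.exp_ne_zero (2 * (L:ℝ) * t)
      field_simp
    have hmono : 2 * n / r ^ 2 * Real.exp (2 * (L:ℝ) * t) * μ t
        ≤ 2 * n / r ^ 2 * Real.exp (2 * (L:ℝ) * T) * μ t := by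
      have hexp : Real.exp (2 * (L:ℝ) * t) ≤ Real.exp (2 * (L:ℝ) * T) :=
        Real.exp_le_exp.mpr (by nlinarith [ht.2])
      have hcoef : (0:ℝ) ≤ 2 * n / r ^ 2 := by positivity
      exact mul_le_mul_of_nonneg_right (mul_le_mul_of_nonneg_left hexp hcoef) hμt.le
    rw [hval]
    exact hmono.trans (hμsize t ht)
  have hpart1 : κ ≤ lapl (fun y => π y t) x + F x := by
    rw [hlapl]
    nlinarith
  refine ⟨hpart1, ?_⟩
  -- Cauchy–Schwarz / Lipschitz estimate
  have hCS : I - (L:ℝ) * N ≤ I' := by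
    have hxmem : x ∈ {x | ∃ t ∈ Set.Icc (0:ℝ) T, ‖x - X t‖ ≤ r} := ⟨t, ht, hxr⟩
    have hamem : a ∈ {x | ∃ t ∈ Set.Icc (0:ℝ) T, ‖x - X t‖ ≤ r} := by
      refine ⟨t, ht, ?_⟩
      simp only [ha, sub_self, norm_zero]; exact hr.le
    have hlip : ‖b x - b a‖ ≤ (L:ℝ) * ‖x - a‖ := by
      have := hb.dist_le_mul x hxmem a hamem
      rwa [dist_eq_norm, dist_eq_norm] at this
    have hcs : |(inner ℝ (x - a) (b x - b a) : ℝ)| ≤ ‖x - a‖ * ‖b x - b a‖ :=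
      abs_real_inner_le_norm _ _
    have hdiff : (inner ℝ (x - a) (b x - b a) : ℝ) = I' - I := by
      rw [hI', hI, inner_sub_right]
    have h1 : -(‖x - a‖ * ‖b x - b a‖) ≤ I' - I := by
      rw [← hdiff]; exact neg_abs_le _ |>.trans' (by linarith [neg_le_neg hcs])
    nlinarith [norm_nonneg (x - a), norm_nonneg (b x - b a),
      mul_le_mul_of_nonneg_left hlip (norm_nonneg (x - a))]
  -- time derivative
  have hderiv : deriv (fun s => π x s) t
      = μ' t * (1 - N / c) + μ t * ((2 * I - 2 * (L:ℝ) * N) / c) := by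
    have hNd : HasDerivAt (fun s => ‖x - X s‖ ^ 2) (2 * (inner ℝ (x - a) (-(b a)) : ℝ)) t := by
      have h1 : HasDerivAt (fun s => x - X s) (-(b (X t))) t :=
        HasDerivAt.const_sub x (hX t)
      have h2 := h1.norm_sq
      rw [← ha] at h2
      exact h2
    have hDd : HasDerivAt (fun s => r ^ 2 * Real.exp (-2 * (L:ℝ) * s)) (-(2 * (L:ℝ)) * c) t := by
      have h1 : HasDerivAt (fun s : ℝ => -2 * (L:ℝ) * s) (-2 * (L:ℝ)) t := by
        simpa using (hasDerivAt_id t).const_mul (-2 * (L:ℝ))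
      have h2 := (h1.exp).const_mul (r ^ 2)
      refine h2.congr_deriv ?_
      rw [hc]; ring
    have hq := hNd.div hDd (by rw [← hc]; exact hcne)
    have hfull := (hμderiv t ht).mul (hq.const_sub 1)
    have hfun2 : (fun s => π x s)
        = fun s => μ s * (1 - ‖x - X s‖ ^ 2 / (r ^ 2 * Real.exp (-2 * (L:ℝ) * s))) := by
      funext s; exact hπ x s
    rw [hfun2]
    have hfull' : HasDerivAt (fun s => μ s * (1 - ‖x - X s‖ ^ 2 / (r ^ 2 * Real.exp (-2 * (L:ℝ) * s)))) _ t := hfull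
    rw [hfull'.deriv, Pi.div_apply]
    rw [← hc, ← ha, ← hN]
    have hIn : (inner ℝ (x - a) (-(b a)) : ℝ) = -I := by rw [hI, inner_neg_right]
    rw [hIn]
    field_simp
    ring
  -- final inequality
  rw [hderiv, hπx, hlapl, hgradb]
  have hK : (0:ℝ) ≤ ‖fderiv ℝ (fun y => π y t) x‖ ^ 2 := by positivity
  set A : ℝ := -(μ t / c * 2) * n + F x with hA
  have hAκ : κ ≤ A := hpart1.trans_eq (by rw [hA, hlapl])
  have h1 : μ' t * (1 - N / c) ≤ (m - 1) * (μ t * (1 - N / c)) * A := by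
    have hg := hμgrow t ht
    have step1 : μ' t * (1 - N / c) ≤ κ * (m - 1) * μ t * (1 - N / c) := by
      nlinarith
    have step2 : κ * (m - 1) * μ t * (1 - N / c) ≤ (m - 1) * (μ t * (1 - N / c)) * A := by
      nlinarith [mul_nonneg (mul_nonneg (mul_nonneg (sub_nonneg.mpr hm.le) hμt.le) hPpos.le)
        (sub_nonneg.mpr hAκ)]
    linarith
  have h2 : μ t * ((2 * I - 2 * (L:ℝ) * N) / c) ≤ -(-(μ t / c * (2 * I'))) := by
    have hnum : μ t * (2 * I - 2 * (L:ℝ) * N) ≤ μ t * (2 * I') := by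
      nlinarith
    calc μ t * ((2 * I - 2 * (L:ℝ) * N) / c) = μ t * (2 * I - 2 * (L:ℝ) * N) / c := by ring
      _ ≤ μ t * (2 * I') / c := (div_le_div_iff_of_pos_right hcpos).mpr hnum
      _ = -(-(μ t / c * (2 * I'))) := by ring
  linarith
end
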